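/- arXiv:1801.04675 — 5 statements merged into one kernel-verified Lean document; each statement's English description precedes it below -/
import Mathlib

section
/- Let G be a finite abelian group and A ⊆ G a nonempty subset. Let W ⊆ G be a maximal subset such that the translates {A + w : w ∈ W} are pairwise δ-separated, i.e. pairwise at symmetric-difference distance more than δ|G| from each other. Then G = ⋃_{w ∈ W} (B' + w) where B' = {x : |A Δ (A+x)| ≤ δ|G|}, and consequently |B'| ≥ |G|/|W|. -/
open Finset Pointwise
set_option maxHeartbeats 1000000

theorem stmt_3 {G : Type*} [AddCommGroup G] [Fintype G] [DecidableEq G]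
    (A : Finset G) (δ : ℝ) (hδ : 0 < δ)
    (W : Finset G)
    (hsep : ∀ w ∈ W, ∀ w' ∈ W, w ≠ w' →
      δ * Fintype.card G < ((symmDiff (A.image (· + w)) (A.image (· + w'))).card : ℝ))
    (hmax : ∀ x : G, (∀ w ∈ W, x ≠ w →
      δ * Fintype.card G < ((symmDiff (A.image (· + x)) (A.image (· + w))).card : ℝ)) → x ∈ W)
    (B' : Finset G)
    (hB' : B' = univ.filter fun x =>
      ((symmDiff A (A.image (· + x))).card : ℝ) ≤ δ * Fintype.card G) :
    (∀ x : G, ∃ w ∈ W, x ∈ B' + {w}) ∧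
      (Fintype.card G : ℝ) / W.card ≤ B'.card := by
  have hδG : (0:ℝ) ≤ δ * Fintype.card G := by positivity
  have cover : ∀ x : G, ∃ w ∈ W, x ∈ B' + {w} := by
    intro x
    by_cases hx : x ∈ W
    · refine ⟨x, hx, ?_⟩
      rw [mem_add]
      refine ⟨0, ?_, x, by simp, by simp⟩
      rw [hB']
      simp only [mem_filter, mem_univ, true_and]
      have : A.image (· + (0:G)) = A := by simp
      rw [this, symmDiff_self]
      simpa using hδG
    · -- use hmax contrapositive: ¬(∀ w ∈ W, ...) → ∃ w ∈ W, x ≠ w ∧ small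
      have := mt (hmax x) hx
      push_neg at this
      obtain ⟨w, hw, _, hle⟩ := this
      refine ⟨w, hw, ?_⟩
      rw [mem_add]
      refine ⟨x - w, ?_, w, by simp, by abel⟩
      rw [hB']
      simp only [mem_filter, mem_univ, true_and]
      have hcard : (symmDiff A (A.image (· + (x - w)))).card
          = (symmDiff (A.image (· + x)) (A.image (· + w))).card := by
        have hinj : Function.Injective (· + w) := add_left_injective w
        rw [← Finset.card_image_of_injective _ hinj,
          Finset.image_symmDiff _ _ hinj, Finset.image_image]
        have h1 : A.image ((· + w) ∘ (· + (x - w))) = A.image (· + x) := by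
          apply Finset.image_congr
          intro a _
          simp [sub_add_cancel, add_assoc]
        rw [h1, symmDiff_comm]
      rw [hcard]
      exact hle
  refine ⟨cover, ?_⟩
  have hWne : W.Nonempty := by
    obtain ⟨w, hw, _⟩ := cover 0
    exact ⟨w, hw⟩
  have hsub : (univ : Finset G) ⊆ W.biUnion fun w => B' + {w} := by
    intro x _
    obtain ⟨w, hw, hx⟩ := cover x
    exact Finset.mem_biUnion.2 ⟨w, hw, hx⟩
  have hcount : Fintype.card G ≤ W.card * B'.card := by
    calc Fintype.card G = (univ : Finset G).card := rfl
      _ ≤ (W.biUnion fun w => B' + {w}).card := by exact Finset.card_le_card hsub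
      _ ≤ ∑ w ∈ W, (B' + {w}).card := Finset.card_biUnion_le
      _ = ∑ w ∈ W, B'.card := Finset.sum_congr rfl fun w _ => by
          rw [Finset.add_singleton]; exact Finset.card_vadd_finset _ _
      _ = W.card * B'.card := by rw [Finset.sum_const, smul_eq_mul]
  rw [div_le_iff₀ (by exact_mod_cast hWne.card_pos)]
  calc (Fintype.card G : ℝ) ≤ (W.card * B'.card : ℕ) := by exact_mod_cast hcount
    _ = B'.card * W.card := by push_cast; ring
end

section
/- Let G be a finite abelian group, H a subgroup of G, and A ⊆ G. Let S be the union of all cosets y + H of H with |A ∩ (y + H)| ≥ |H|/2. Then |A Δ S| ≤ (1/|H|) · Σ_{x ∈ H} |A Δ (A + x)|. -/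
open Finset

theorem stmt_4 {G : Type*} [AddCommGroup G] [Fintype G] [DecidableEq G]
    (H : AddSubgroup G) [DecidablePred (· ∈ H)] (A : Finset G)
    (S : Finset G)
    (hS : S = univ.filter fun g =>
      (Nat.card H : ℝ) / 2 ≤ ((A ∩ (univ.filter fun z => z - g ∈ H)).card : ℝ)) :
    ((symmDiff A S).card : ℝ) ≤
      (1 / (Nat.card H : ℝ)) *
        ∑ x ∈ univ.filter (· ∈ H), ((symmDiff A (A.image (· + x))).card : ℝ) := by
  classical
  set Hfs : Finset G := univ.filter (· ∈ H) with hHfs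
  have hcard : Nat.card H = Hfs.card := by
    rw [Nat.card_eq_fintype_card, Fintype.card_subtype]
  set hc := Hfs.card with hhc
  have hc_pos : 0 < hc := card_pos.2 ⟨0, by
    simp only [hHfs, mem_filter, mem_univ, true_and]; exact H.zero_mem⟩
  set a : G → ℕ := fun g => (A ∩ univ.filter (fun z => z - g ∈ H)).card with ha
  set f : G → ℕ := fun g => if g ∈ A then hc - a g else a g with hf
  have hmemim : ∀ (g x : G), g ∈ A.image (· + x) ↔ g - x ∈ A := by
    intro g x
    simp only [mem_image]
    constructor
    · rintro ⟨b, hb, rfl⟩; simpa using hb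
    · intro h; exact ⟨g - x, h, by abel⟩
  have hbij : ∀ g : G, (Hfs.filter (fun x => g - x ∈ A)).card = a g := by
    intro g
    rw [ha]
    apply card_bij (fun x _ => g - x)
    · intro x hx
      simp only [mem_filter, hHfs, mem_univ, true_and] at hx ⊢
      rw [mem_inter, mem_filter]
      refine ⟨hx.2, mem_univ _, ?_⟩
      have : g - x - g = -x := by abel
      rw [this]
      exact H.neg_mem hx.1
    · intro x hx y hy hxy
      have : g - (g - x) = g - (g - y) := by rw [hxy]
      simpa using this
    · intro z hz
      rw [mem_inter, mem_filter] at hz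
      refine ⟨g - z, ?_, by abel⟩
      simp only [mem_filter, hHfs, mem_univ, true_and]
      constructor
      · have : -(z - g) = g - z := by abel
        rw [← this]; exact H.neg_mem hz.2.2
      · have : g - (g - z) = z := by abel
        rw [this]; exact hz.1
  have ha_le : ∀ g : G, a g ≤ hc := by
    intro g
    rw [← hbij g]
    exact card_filter_le _ _
  -- Step A : swap the order of summation
  have stepA : ∑ x ∈ Hfs, (symmDiff A (A.image (· + x))).card = ∑ g : G, f g := by
    have h1 : ∀ x : G, (symmDiff A (A.image (· + x))).card
        = ∑ g : G, if g ∈ symmDiff A (A.image (· + x)) then 1 else 0 := by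
      intro x
      rw [← card_filter, filter_mem_eq_inter, univ_inter]
    calc ∑ x ∈ Hfs, (symmDiff A (A.image (· + x))).card
        = ∑ x ∈ Hfs, ∑ g : G, if g ∈ symmDiff A (A.image (· + x)) then 1 else 0 := by
          exact Finset.sum_congr rfl fun x _ => h1 x
      _ = ∑ g : G, ∑ x ∈ Hfs, if g ∈ symmDiff A (A.image (· + x)) then 1 else 0 :=
          Finset.sum_comm
      _ = ∑ g : G, f g := by
          refine Finset.sum_congr rfl fun g _ => ?_
          rw [← card_filter]
          have hcond : ∀ x : G, g ∈ symmDiff A (A.image (· + x)) ↔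
              ((g ∈ A ∧ ¬ g - x ∈ A) ∨ (g - x ∈ A ∧ ¬ g ∈ A)) := by
            intro x
            rw [Finset.mem_symmDiff, hmemim]
          by_cases hgA : g ∈ A
          · have : Hfs.filter (fun x => g ∈ symmDiff A (A.image (· + x)))
                = Hfs.filter (fun x => ¬ g - x ∈ A) := by
              apply filter_congr
              intro x _
              rw [hcond x]
              tauto
            rw [this, hf]
            simp only [hgA, if_true]
            have := Finset.card_filter_add_card_filter_not
              (s := Hfs) (p := fun x => g - x ∈ A)
            rw [← hbij g]
            omega
          · have : Hfs.filter (fun x => g ∈ symmDiff A (A.image (· + x)))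
                = Hfs.filter (fun x => g - x ∈ A) := by
              apply filter_congr
              intro x _
              rw [hcond x]
              tauto
            rw [this, hf]
            simp only [hgA, if_false]
            exact hbij g
  -- quotient map and fibers
  set π : G → G ⧸ H := QuotientAddGroup.mk with hπ
  have hπiff : ∀ z g : G, π z = π g ↔ z - g ∈ H := by
    intro z g
    rw [hπ, QuotientAddGroup.eq, ← AddSubgroup.neg_mem_iff]
    congr! 1
    abel
  set F : G ⧸ H → Finset G := fun q => univ.filter (fun g => π g = q) with hF
  have hFc : ∀ q, (F q).card = hc := by
    intro q
    obtain ⟨g0, hg0⟩ := QuotientAddGroup.mk_surjective q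
    have hg0' : π g0 = q := hg0
    rw [hF]
    apply card_bij (fun g _ => g - g0)
    · intro g hg
      simp only [mem_filter, mem_univ, true_and] at hg
      simp only [hHfs, mem_filter, mem_univ, true_and]
      rw [← hπiff, hg, hg0']
    · intro x hx y hy hxy
      have : x - g0 + g0 = y - g0 + g0 := by rw [hxy]
      simpa using this
    · intro x hx
      simp only [hHfs, mem_filter, mem_univ, true_and] at hx
      refine ⟨x + g0, ?_, by abel⟩
      simp only [mem_filter, mem_univ, true_and]
      rw [← hg0', hπiff]
      simpa using hx
  have haF : ∀ q, ∀ g ∈ F q, a g = (A ∩ F q).card := by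
    intro q g hg
    simp only [hF, mem_filter, mem_univ, true_and] at hg
    have hfe : univ.filter (fun z => z - g ∈ H) = F q := by
      ext z
      simp only [hF, mem_filter, mem_univ, true_and]
      rw [← hπiff, hg]
    rw [ha]
    simp only []
    rw [hfe]
  -- membership in S is constant on fibers
  have hSmem : ∀ q, ∀ g ∈ F q, (g ∈ S ↔ (hc : ℝ) / 2 ≤ ((A ∩ F q).card : ℝ)) := by
    intro q g hg
    have h1 : (A ∩ univ.filter (fun z => z - g ∈ H)).card = (A ∩ F q).card := haF q g hg
    rw [hS, mem_filter, hcard]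
    simp only [mem_univ, true_and]
    rw [h1]
  -- step B, per fiber
  have stepB : ∀ q, hc * ((symmDiff A S).filter (fun g => π g = q)).card
      ≤ ∑ g ∈ F q, f g := by
    intro q
    set aq := (A ∩ F q).card with haq
    have haq_le : aq ≤ hc := by
      rw [haq, ← hFc q]
      exact card_le_card (inter_subset_right)
    have hsum : ∑ g ∈ F q, f g = aq * (hc - aq) + (hc - aq) * aq := by
      have hsplit : F q = (A ∩ F q) ∪ (F q \ A) := by
        ext g; simp only [mem_union, mem_inter, mem_sdiff]; tauto
      have hdisj : Disjoint (A ∩ F q) (F q \ A) := by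
        rw [disjoint_left]
        intro g hg hg'
        rw [mem_inter] at hg
        rw [mem_sdiff] at hg'
        exact hg'.2 hg.1
      rw [hsplit, sum_union hdisj]
      have h1 : ∑ g ∈ A ∩ F q, f g = aq * (hc - aq) := by
        have hv : ∀ g ∈ A ∩ F q, f g = hc - aq := by
          intro g hg
          rw [mem_inter] at hg
          rw [hf]
          simp only [hg.1, if_true]
          rw [haF q g hg.2, ← haq]
        rw [Finset.sum_congr rfl hv, sum_const, smul_eq_mul, ← haq]
      have h2 : ∑ g ∈ F q \ A, f g = (hc - aq) * aq := by
        have hcards : (F q \ A).card = hc - aq := by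
          have h3 : (F q \ A).card + (F q ∩ A).card = (F q).card :=
            Finset.card_sdiff_add_card_inter _ _
          rw [hFc q, inter_comm] at h3
          omega
        have hv : ∀ g ∈ F q \ A, f g = aq := by
          intro g hg
          rw [mem_sdiff] at hg
          rw [hf]
          simp only [hg.2, if_false]
          rw [haF q g hg.1, ← haq]
        rw [Finset.sum_congr rfl hv, sum_const, smul_eq_mul, hcards]
      rw [h1, h2]
    rw [hsum]
    by_cases hcase : (hc : ℝ) / 2 ≤ (aq : ℝ)
    · -- fiber inside S
      have hhalf : hc ≤ 2 * aq := by
        have : (hc : ℝ) ≤ 2 * aq := by linarith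
        exact_mod_cast this
      have hset : (symmDiff A S).filter (fun g => π g = q) = F q \ A := by
        ext g
        simp only [mem_filter, Finset.mem_symmDiff, mem_sdiff, hF, mem_univ, true_and]
        constructor
        · rintro ⟨h1, h2⟩
          have hgF : g ∈ F q := by simp [hF, h2]
          have hgS : g ∈ S := (hSmem q g hgF).2 (by rw [← haq]; exact hcase)
          rcases h1 with ⟨hA, hnS⟩ | ⟨hS', hnA⟩
          · exact absurd hgS hnS
          · exact ⟨h2, hnA⟩
        · rintro ⟨h2, hnA⟩
          have hgF : g ∈ F q := by simp [hF, h2]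
          have hgS : g ∈ S := (hSmem q g hgF).2 (by rw [← haq]; exact hcase)
          exact ⟨Or.inr ⟨hgS, hnA⟩, h2⟩
      rw [hset]
      have hcardsd : (F q \ A).card = hc - aq := by
        have h3 : (F q \ A).card + (F q ∩ A).card = (F q).card :=
          Finset.card_sdiff_add_card_inter _ _
        rw [hFc q, inter_comm] at h3
        omega
      rw [hcardsd]
      calc hc * (hc - aq) ≤ 2 * aq * (hc - aq) := Nat.mul_le_mul_right _ hhalf
        _ = aq * (hc - aq) + (hc - aq) * aq := by ring
    · -- fiber disjoint from S
      have hhalf : 2 * aq ≤ hc := by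
        push_neg at hcase
        have : 2 * (aq : ℝ) < hc := by linarith
        have h' : 2 * aq < hc := by exact_mod_cast this
        omega
      have hset : (symmDiff A S).filter (fun g => π g = q) = A ∩ F q := by
        ext g
        simp only [mem_filter, Finset.mem_symmDiff, mem_inter, hF, mem_univ, true_and]
        constructor
        · rintro ⟨h1, h2⟩
          have hgF : g ∈ F q := by simp [hF, h2]
          have hgS : g ∉ S := fun hgs =>
            hcase (by rw [haq]; exact (hSmem q g hgF).1 hgs)
          rcases h1 with ⟨hA, _⟩ | ⟨hS', _⟩
          · exact ⟨hA, h2⟩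
          · exact absurd hS' hgS
        · rintro ⟨hA, h2⟩
          have hgF : g ∈ F q := by simp [hF, h2]
          have hgS : g ∉ S := fun hgs =>
            hcase (by rw [haq]; exact (hSmem q g hgF).1 hgs)
          exact ⟨Or.inl ⟨hA, hgS⟩, h2⟩
      rw [hset, ← haq]
      have h2 : hc ≤ 2 * (hc - aq) := by omega
      calc hc * aq ≤ 2 * (hc - aq) * aq := Nat.mul_le_mul_right _ h2
        _ = aq * (hc - aq) + (hc - aq) * aq := by ring
  -- assemble
  have hmain : hc * (symmDiff A S).card ≤ ∑ x ∈ Hfs, (symmDiff A (A.image (· + x))).card := by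
    rw [stepA]
    have hfib : (symmDiff A S).card
        = ∑ q : G ⧸ H, ((symmDiff A S).filter (fun g => π g = q)).card :=
      card_eq_sum_card_fiberwise (fun g _ => mem_univ (π g))
    have hfib2 : ∑ g : G, f g = ∑ q : G ⧸ H, ∑ g ∈ F q, f g := by
      rw [hF]
      exact (sum_fiberwise_of_maps_to (fun g _ => mem_univ (π g)) f).symm
    rw [hfib, hfib2, mul_sum]
    exact Finset.sum_le_sum fun q _ => stepB q
  -- conclude with real arithmetic
  have hsumcast : ∑ x ∈ Hfs, ((symmDiff A (A.image (· + x))).card : ℝ)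
      = ((∑ x ∈ Hfs, (symmDiff A (A.image (· + x))).card : ℕ) : ℝ) := by
    push_cast
    rfl
  rw [hcard, hsumcast]
  rw [one_div, inv_mul_eq_div, le_div_iff₀ (by exact_mod_cast hc_pos)]
  calc ((symmDiff A S).card : ℝ) * hc = ((hc * (symmDiff A S).card : ℕ) : ℝ) := by
        push_cast; ring
    _ ≤ _ := by exact_mod_cast hmain
end

section
/- Let n and k be positive integers with k ≤ n/2. In any n-vertex graph with maximum degree at most n/k, a uniformly random k-element subset of the vertices contains an independent set of size at least k/4 with probability at least 1 − e^{−k/8}. -/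
/-!
Call a `k`-set bad if all its independent subsets have fewer than `k / 4` elements. A maximal
independent subset `I` of a bad set `s` dominates `s`, so `s \ I` lies in the neighbourhood of `I`,
which has at most `|I| * n / k` vertices. A union bound over `I` gives at most
`∑_{j < k/4} C(n, j) * C(j n / k, k - j)` bad sets. As `j n / k ≤ n / 4` and `n - j ≥ 7 n / 8`, the
`j`-th term is at most `C(n, k) * C(k, j) * (2/7)^(k - j) ≤ C(n, k) * 2^k * (2/7)^(k - j)`; summing
the geometric series and using `k - j ≥ (3 k + 1) / 4` bounds the total by
`C(n, k) * (7/8)^k ≤ C(n, k) * exp (-k / 8)`.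
-/

open Finset

namespace Nat

theorem descFactorial_mul_pow_le_descFactorial_mul_pow {a b : ℕ} (hab : a ≤ b) (r : ℕ) :
    a.descFactorial r * b ^ r ≤ b.descFactorial r * a ^ r := by
  induction r with
  | zero => simp
  | succ r ih =>
    have hstep : (a - r) * b ≤ (b - r) * a := by
      rw [Nat.sub_mul, Nat.sub_mul, Nat.mul_comm a b]
      exact Nat.sub_le_sub_left (Nat.mul_le_mul_left r hab) _
    calc a.descFactorial (r + 1) * b ^ (r + 1)
        = ((a - r) * b) * (a.descFactorial r * b ^ r) := by
          rw [descFactorial_succ, pow_succ]; ring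
      _ ≤ ((b - r) * a) * (b.descFactorial r * a ^ r) := Nat.mul_le_mul hstep ih
      _ = b.descFactorial (r + 1) * a ^ (r + 1) := by rw [descFactorial_succ, pow_succ]; ring

theorem choose_mul_pow_le_choose_mul_pow {a b : ℕ} (hab : a ≤ b) (r : ℕ) :
    a.choose r * b ^ r ≤ b.choose r * a ^ r := by
  have h := descFactorial_mul_pow_le_descFactorial_mul_pow hab r
  rw [descFactorial_eq_factorial_mul_choose, descFactorial_eq_factorial_mul_choose,
    Nat.mul_assoc, Nat.mul_assoc] at h
  exact Nat.le_of_mul_le_mul_left h r.factorial_pos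

variable {α : Type*} [Field α] [LinearOrder α] [IsStrictOrderedRing α]

theorem cast_choose_le_cast_choose_mul_div_pow {a b : ℕ} (hab : a ≤ b) (r : ℕ) :
    (a.choose r : α) ≤ b.choose r * ((a : α) / b) ^ r := by
  rcases Nat.eq_zero_or_pos b with rfl | hb
  · obtain rfl : a = 0 := Nat.le_zero.1 hab
    cases r <;> simp
  have hbr : (0 : α) < (b : α) ^ r := by positivity
  rw [div_pow, ← mul_div_assoc, le_div_iff₀ hbr]
  exact_mod_cast choose_mul_pow_le_choose_mul_pow hab r

theorem cast_choose_mul_choose_le {n k j a : ℕ} (hjk : j ≤ k) (ha : a ≤ n - j) :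
    (n.choose j * a.choose (k - j) : α) ≤
      n.choose k * 2 ^ k * ((a : α) / (n - j : ℕ)) ^ (k - j) :=
  calc (n.choose j * a.choose (k - j) : α)
      ≤ n.choose j * ((n - j).choose (k - j) * ((a : α) / (n - j : ℕ)) ^ (k - j)) := by
        gcongr; exact cast_choose_le_cast_choose_mul_div_pow ha _
    _ = (n.choose k * k.choose j : ℕ) * ((a : α) / (n - j : ℕ)) ^ (k - j) := by
        rw [choose_mul hjk]; push_cast; ring
    _ ≤ n.choose k * 2 ^ k * ((a : α) / (n - j : ℕ)) ^ (k - j) := by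
        push_cast; gcongr; exact_mod_cast choose_le_two_pow k j

end Nat

theorem sum_range_pow_sub_le {α : Type*} [Field α] [LinearOrder α] [IsStrictOrderedRing α]
    {x : α} (hx₀ : 0 ≤ x) (hx₁ : x < 1) {k m : ℕ} (hmk : m ≤ k) :
    ∑ j ∈ range (m + 1), x ^ (k - j) ≤ x ^ (k - m) / (1 - x) := by
  have hsplit : ∀ j ∈ range (m + 1), x ^ (k - j) = x ^ (k - m) * x ^ (m + 1 - 1 - j) := by
    intro j hj
    rw [← pow_add]
    congr 1
    have := mem_range.1 hj
    omega
  rw [sum_congr rfl hsplit, ← mul_sum, sum_range_reflect, div_eq_mul_one_div]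
  refine mul_le_mul_of_nonneg_left ?_ (pow_nonneg hx₀ _)
  have hgeom := geom_sum_Ico_le_of_lt_one (m := 0) (n := m + 1) hx₀ hx₁
  rwa [← range_eq_Ico, pow_zero] at hgeom

theorem two_pow_mul_two_div_seven_pow_div_le_exp {k r : ℕ} (hk : 1 ≤ k) (hr : 3 * k + 1 ≤ 4 * r) :
    2 ^ k * ((2 : ℝ) / 7) ^ r / (1 - 2 / 7) ≤ Real.exp (-k / 8) := by
  have hexp : ((7 : ℝ) / 8) ^ k ≤ Real.exp (-k / 8) := by
    calc ((7 : ℝ) / 8) ^ k ≤ Real.exp (-1 / 8) ^ k := by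
          gcongr; linarith [Real.add_one_le_exp (-1 / 8 : ℝ)]
      _ = Real.exp (-k / 8) := by rw [← Real.exp_nat_mul]; ring_nf
  refine le_trans ?_ hexp
  -- Compare fourth powers, so that `3 * k + 1 ≤ 4 * r` applies without fractional exponents.
  rw [← pow_le_pow_iff_left₀ (by positivity) (by positivity) four_ne_zero]
  obtain ⟨s, rfl⟩ : ∃ s, k = s + 1 := ⟨k - 1, by omega⟩
  have hq : ((2 : ℝ) / 7) ^ (4 * r) ≤ (2 / 7) ^ (3 * (s + 1) + 1) :=
    pow_le_pow_of_le_one (by norm_num) (by norm_num) hr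
  calc (2 ^ (s + 1) * ((2 : ℝ) / 7) ^ r / (1 - 2 / 7)) ^ 4
      = (7 / 5) ^ 4 * (2 ^ (s + 1)) ^ 4 * ((2 : ℝ) / 7) ^ (4 * r) := by
        rw [mul_comm 4 r, pow_mul]; ring
    _ ≤ (7 / 5) ^ 4 * (2 ^ (s + 1)) ^ 4 * ((2 : ℝ) / 7) ^ (3 * (s + 1) + 1) := by gcongr
    _ = (7 / 5) ^ 4 * (2 / 7) * (2 ^ 4 * (2 / 7) ^ 3) * (2 ^ 4 * (2 / 7) ^ 3) ^ s := by
        simp only [mul_pow, ← pow_mul]; ring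
    _ ≤ (7 / 8) ^ 4 * ((7 / 8) ^ 4) ^ s := by gcongr <;> norm_num
    _ = ((7 / 8) ^ (s + 1)) ^ 4 := by rw [← pow_mul, ← pow_mul]; ring

namespace SimpleGraph

variable {V : Type*} (G : SimpleGraph V)

theorem isIndepSet_iff_forall_not_adj {s : Set V} :
    G.IsIndepSet s ↔ ∀ a ∈ s, ∀ b ∈ s, ¬ G.Adj a b :=
  ⟨fun h _ ha _ hb hab => h ha hb (G.ne_of_adj hab) hab, fun h _ ha _ hb _ => h _ ha _ hb⟩

theorem exists_isIndepSet_subset_forall_exists_adj [DecidableEq V] [DecidableRel G.Adj]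
    (s : Finset V) : ∃ I ⊆ s, G.IsIndepSet (I : Set V) ∧ ∀ v ∈ s \ I, ∃ w ∈ I, G.Adj v w := by
  obtain ⟨I, hImax⟩ :=
    (s.powerset.filter fun I : Finset V => G.IsIndepSet (I : Set V)).exists_maximal ⟨∅, by simp⟩
  obtain ⟨hIs, hI⟩ : I ⊆ s ∧ G.IsIndepSet (I : Set V) := by simpa using hImax.prop
  refine ⟨I, hIs, hI, fun v hv => ?_⟩
  rw [mem_sdiff] at hv
  by_contra! hno
  have hins : insert v I ∈ s.powerset.filter fun I : Finset V => G.IsIndepSet (I : Set V) := by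
    simp only [mem_filter, mem_powerset, coe_insert]
    exact ⟨insert_subset hv.1 hIs, hI.insert fun w hw _ => ⟨hno w hw, fun h => hno w hw h.symm⟩⟩
  exact hv.2 (hImax.le_of_ge hins (subset_insert v I) (mem_insert_self v I))

variable [Fintype V] [DecidableEq V] [DecidableRel G.Adj] {d : ℕ}

theorem card_biUnion_neighborFinset_le (hdeg : ∀ v, G.degree v ≤ d) (I : Finset V) :
    #(I.biUnion fun v => G.neighborFinset v) ≤ #I * d :=
  card_biUnion_le.trans <| (sum_le_sum fun v _ => hdeg v).trans_eq (by simp)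

theorem card_filter_forall_isIndepSet_card_lt_le (hdeg : ∀ v, G.degree v ≤ d) (k r : ℕ) :
    #{s ∈ powersetCard k univ | ∀ I : Finset V, I ⊆ s → G.IsIndepSet (I : Set V) → #I < r} ≤
      ∑ j ∈ range r, (Fintype.card V).choose j * (j * d).choose (k - j) := by
  calc _ ≤ #((range r).biUnion fun j => (powersetCard j univ).biUnion fun I =>
          (powersetCard (k - j) (I.biUnion fun v => G.neighborFinset v)).image (I ∪ ·)) := by
        refine card_le_card fun s hs => ?_
        rw [mem_filter, mem_powersetCard_univ] at hs
        obtain ⟨I, hIs, hI, hdom⟩ := G.exists_isIndepSet_subset_forall_exists_adj s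
        simp only [mem_biUnion, mem_range, mem_image, mem_powersetCard]
        refine ⟨#I, hs.2 I hIs hI, I, ⟨subset_univ I, rfl⟩, s \ I, ⟨fun v hv => ?_, ?_⟩,
          union_sdiff_of_subset hIs⟩
        · obtain ⟨w, hw, hvw⟩ := hdom v hv
          exact mem_biUnion.2 ⟨w, hw, (G.mem_neighborFinset w v).2 hvw.symm⟩
        · rw [card_sdiff_of_subset hIs, hs.1]
    _ ≤ ∑ j ∈ range r, ∑ I ∈ powersetCard j (univ : Finset V), (j * d).choose (k - j) := by
        refine card_biUnion_le.trans <| sum_le_sum fun j _ => card_biUnion_le.trans <|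
          sum_le_sum fun I hI => card_image_le.trans ?_
        rw [card_powersetCard, ← (mem_powersetCard_univ.1 hI)]
        exact Nat.choose_le_choose _ (G.card_biUnion_neighborFinset_le hdeg I)
    _ = _ := by simp [card_powersetCard]

theorem cast_card_filter_forall_isIndepSet_four_mul_card_lt_le {n k : ℕ}
    (hn : Fintype.card V = n) (hdeg : ∀ v, G.degree v ≤ d) (hk : 1 ≤ k) (hkn : 2 * k ≤ n)
    (hkd : k * d ≤ n) :
    (#{s ∈ powersetCard k univ |
        ∀ I : Finset V, I ⊆ s → G.IsIndepSet (I : Set V) → 4 * #I < k} : ℝ) ≤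
      Real.exp (-k / 8) * n.choose k := by
  set m := (k - 1) / 4
  simp only [show ∀ i, 4 * i < k ↔ i < m + 1 from fun i => by omega]
  have hterm : ∀ j ∈ range (m + 1), ((n.choose j * (j * d).choose (k - j) : ℕ) : ℝ) ≤
      n.choose k * 2 ^ k * (2 / 7) ^ (k - j) := by
    intro j hj
    have h4j : 4 * j < k := by have := mem_range.1 hj; omega
    have h4jd : 4 * (j * d) ≤ n := by nlinarith
    push_cast
    calc (n.choose j * (j * d).choose (k - j) : ℝ)
        ≤ n.choose k * 2 ^ k * ((j * d : ℕ) / (n - j : ℕ) : ℝ) ^ (k - j) :=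
          Nat.cast_choose_mul_choose_le (by omega) (by omega)
      _ ≤ n.choose k * 2 ^ k * (2 / 7) ^ (k - j) := by
          gcongr _ * ?_ ^ _
          rw [div_le_div_iff₀ (by norm_cast; omega) (by norm_num)]
          exact_mod_cast (by omega : j * d * 7 ≤ 2 * (n - j))
  calc _ ≤ ((∑ j ∈ range (m + 1), n.choose j * (j * d).choose (k - j) : ℕ) : ℝ) := by
        exact_mod_cast hn ▸ G.card_filter_forall_isIndepSet_card_lt_le hdeg k (m + 1)
    _ ≤ ∑ j ∈ range (m + 1), (n.choose k * 2 ^ k * (2 / 7) ^ (k - j) : ℝ) := by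
        rw [Nat.cast_sum]; exact sum_le_sum hterm
    _ = n.choose k * (2 ^ k * ∑ j ∈ range (m + 1), (2 / 7 : ℝ) ^ (k - j)) := by
        simp only [mul_sum, mul_assoc]
    _ ≤ n.choose k * (2 ^ k * ((2 / 7) ^ (k - m) / (1 - 2 / 7))) := by
        gcongr; exact sum_range_pow_sub_le (by norm_num) (by norm_num) (by omega)
    _ ≤ n.choose k * Real.exp (-k / 8) := by
        gcongr
        rw [← mul_div_assoc]
        exact two_pow_mul_two_div_seven_pow_div_le_exp hk (by omega)
    _ = Real.exp (-k / 8) * n.choose k := mul_comm _ _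

end SimpleGraph

open scoped Classical in
theorem stmt_9 {V : Type*} [Fintype V] (G : SimpleGraph V)
    (n k : ℕ) (hn : n = Fintype.card V) (hk : 1 ≤ k) (hkn : 2 * k ≤ n)
    (hdeg : ∀ v : V, (G.degree v : ℝ) ≤ (n : ℝ) / k) :
    (1 - Real.exp (-(k : ℝ) / 8)) * (n.choose k) ≤
      (((univ : Finset V).powersetCard k).filter fun s =>
        ∃ I ⊆ s, (k : ℝ) / 4 ≤ I.card ∧ ∀ a ∈ I, ∀ b ∈ I, ¬ G.Adj a b).card := by
  have hdeg' : ∀ v, G.degree v ≤ n / k := fun v => (Nat.le_div_iff_mul_le hk).2 <| by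
    exact_mod_cast (le_div_iff₀ (by positivity)).1 (hdeg v)
  have hbad := G.cast_card_filter_forall_isIndepSet_four_mul_card_lt_le hn.symm hdeg' hk hkn
    (Nat.mul_div_le n k)
  have hsplit := card_filter_add_card_filter_not (s := powersetCard k (univ : Finset V))
    (p := fun s => ∃ I ⊆ s, (k : ℝ) / 4 ≤ I.card ∧ ∀ a ∈ I, ∀ b ∈ I, ¬ G.Adj a b)
  have hquarter : ∀ i : ℕ, (k : ℝ) / 4 ≤ i ↔ k ≤ 4 * i := fun i => by
    rw [div_le_iff₀ four_pos, mul_comm]; norm_cast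
  have hcompl : ∀ s : Finset V,
      (¬ ∃ I ⊆ s, (k : ℝ) / 4 ≤ I.card ∧ ∀ a ∈ I, ∀ b ∈ I, ¬ G.Adj a b) ↔
        ∀ I : Finset V, I ⊆ s → G.IsIndepSet (I : Set V) → 4 * #I < k := fun s => by
    simp only [not_exists, not_and, G.isIndepSet_iff_forall_not_adj, mem_coe, hquarter,
      ← not_lt, not_imp_not]
  rw [card_powersetCard, card_univ, ← hn, filter_congr fun s _ => hcompl s] at hsplit
  have hsplit' := congrArg (Nat.cast (R := ℝ)) hsplit
  push_cast at hsplit'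
  linarith
end

section
/- If 𝒮 is a set system on an n-element ground set with VC dimension at most d, then |𝒮| ≤ Σ_{i=0}^{d} C(n, i) ≤ 2n^d (the latter inequality for n, d ≥ 1). -/
/-!
Every set in the family lies in its shatterer (the sets it shatters), and all of those have size
at most the VC dimension, so counting subsets of size at most `d` bounds the family (Pajor's
form of the Sauer–Perles–Shelah lemma, `Finset.card_shatterer_le_sum_vcDim`). For the second
bound, `C(n, i) ≤ n ^ i`, and for `n ≥ 2` the geometric sum `∑_{i ≤ d} n ^ i` is less than
`2 n ^ d`; the case `n = 1` is checked directly.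
-/

open Finset

theorem Finset.card_le_sum_choose_of_vcDim_le {α : Type*} [Fintype α] [DecidableEq α]
    {𝒜 : Finset (Finset α)} {d : ℕ} (h𝒜 : 𝒜.vcDim ≤ d) :
    #𝒜 ≤ ∑ i ∈ range (d + 1), (Fintype.card α).choose i :=
  calc #𝒜 ≤ #𝒜.shatterer := 𝒜.card_le_card_shatterer
    _ ≤ ∑ i ∈ Iic 𝒜.vcDim, (Fintype.card α).choose i := card_shatterer_le_sum_vcDim
    _ ≤ ∑ i ∈ range (d + 1), (Fintype.card α).choose i := by
      rw [Nat.range_succ_eq_Iic]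
      exact sum_le_sum_of_subset (Iic_subset_Iic.2 h𝒜)

theorem Nat.sum_range_succ_pow_le_two_mul_pow {n : ℕ} (hn : 2 ≤ n) (d : ℕ) :
    ∑ i ∈ range (d + 1), n ^ i ≤ 2 * n ^ d := by
  rw [sum_range_succ, two_mul]
  exact Nat.add_le_add_right (Nat.geomSum_lt hn fun _ => mem_range.1).le _

theorem Nat.sum_range_succ_choose_le_two_mul_pow {n : ℕ} (hn : 1 ≤ n) (d : ℕ) :
    ∑ i ∈ range (d + 1), n.choose i ≤ 2 * n ^ d := by
  obtain rfl | hn2 : n = 1 ∨ 2 ≤ n := by omega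
  · cases d with
    | zero => simp
    | succ d => simp [sum_range_succ', Nat.choose_eq_zero_of_lt]
  · calc ∑ i ∈ range (d + 1), n.choose i ≤ ∑ i ∈ range (d + 1), n ^ i :=
          sum_le_sum fun i _ => Nat.choose_le_pow n i
      _ ≤ 2 * n ^ d := Nat.sum_range_succ_pow_le_two_mul_pow hn2 d

theorem stmt_11_general {Ω : Type*} [Fintype Ω] [DecidableEq Ω]
    (𝒮 : Finset (Finset Ω)) (n d : ℕ) (hn : n = Fintype.card Ω)
    (hn1 : 1 ≤ n)
    (hVC : 𝒮.vcDim ≤ d) :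
    𝒮.card ≤ ∑ i ∈ Finset.range (d + 1), n.choose i ∧
      ∑ i ∈ Finset.range (d + 1), n.choose i ≤ 2 * n ^ d := by
  subst hn
  exact ⟨card_le_sum_choose_of_vcDim_le hVC, Nat.sum_range_succ_choose_le_two_mul_pow hn1 d⟩

theorem stmt_11 {Ω : Type*} [Fintype Ω] [DecidableEq Ω]
    (𝒮 : Finset (Finset Ω)) (n d : ℕ) (hn : n = Fintype.card Ω)
    (hn1 : 1 ≤ n) (hd1 : 1 ≤ d)
    (hVC : 𝒮.vcDim ≤ d) :
    𝒮.card ≤ ∑ i ∈ Finset.range (d + 1), n.choose i ∧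
      ∑ i ∈ Finset.range (d + 1), n.choose i ≤ 2 * n ^ d :=
  stmt_11_general 𝒮 n d hn hn1 hVC
end

section
/- Let m, d be positive integers, 0 < δ < 1, and let G be a finite abelian group with |G| ≥ 24 m^d. Let A ⊆ G. Let X be a uniformly random 12m^d-element subset of G and Y a uniformly random m-element subset of G (independent). If the event that the set system {(A + x) ∩ Y : x ∈ X} has VC dimension at most d occurs with probability at least e^{−m^d} + 3m^{2d}(1−δ)^m, then B = {x ∈ G : |A Δ (A + x)| ≤ δ|G|} satisfies |B| ≥ |G|/(12 m^d). -/
/-!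
Suppose `B` has fewer than `|G| / (12 t)` elements, where `t = m ^ d`, and call a `12 t`-set `X`
good if it contains `2 t + 1` points no two of which differ by an element of `B`. For good `X`
and any `m`-set `Y` on which the traces `(A + x) ∩ Y`, `x ∈ X`, have VC dimension at most `d`,
Sauer–Shelah allows at most `2 t` distinct traces, so two of those points `x ≠ y` have equal
traces: `Y` misses `(A + x) Δ (A + y)`, which has more than `δ |G|` elements. A union bound over
the `(2 t + 1).choose 2 ≤ 3 t ^ 2` pairs leaves at most a `3 t ^ 2 (1 - δ) ^ m` fraction of such
`Y`. A bad `X` lies in `I + B` for a maximal such subset `I ⊆ X` with `|I| ≤ 2 t`; as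
`|I + B| ≤ 2 t |B| < |G| / 6`, counting these `X` shows they make up less than an `e ^ (-t)`
fraction of all `12 t`-sets. So the pairs `(X, Y)` of small VC dimension are fewer than assumed.
-/

open Finset
open scoped Pointwise

namespace Nat

lemma pow_mul_choose_le_pow_mul_choose {a n r c e : ℕ}
    (h : ∀ i < r, c * (a - i) ≤ e * (n - i)) : c ^ r * a.choose r ≤ e ^ r * n.choose r := by
  have key : c ^ r * a.descFactorial r ≤ e ^ r * n.descFactorial r := by
    simp only [descFactorial_eq_prod_range, pow_eq_prod_const, ← prod_mul_distrib]
    exact prod_le_prod' fun i hi => h i (mem_range.1 hi)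
  rw [descFactorial_eq_factorial_mul_choose, descFactorial_eq_factorial_mul_choose,
    mul_left_comm, mul_left_comm (e ^ r)] at key
  exact Nat.le_of_mul_le_mul_left key r.factorial_pos

lemma choose_le_div_pow_mul_choose {a n : ℕ} (r : ℕ) (han : a ≤ n) (hn : 0 < n) :
    (a.choose r : ℝ) ≤ ((a : ℝ) / n) ^ r * n.choose r := by
  have key : n ^ r * a.choose r ≤ a ^ r * n.choose r :=
    pow_mul_choose_le_pow_mul_choose fun i _ => by
      rw [Nat.mul_sub, Nat.mul_sub, mul_comm a n]
      exact Nat.sub_le_sub_left (Nat.mul_le_mul_right i han) _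
  rw [div_pow, div_mul_eq_mul_div, le_div_iff₀ (by positivity), mul_comm]
  exact_mod_cast key

lemma pow_mul_choose_mul_choose_le {n a j k c : ℕ} (hjk : j ≤ k)
    (h : ∀ i < k - j, c * (a - i) ≤ n - j - i) :
    c ^ (k - j) * (n.choose j * a.choose (k - j)) ≤ 2 ^ k * n.choose k := by
  have hsmall : c ^ (k - j) * a.choose (k - j) ≤ (n - j).choose (k - j) := by
    simpa using pow_mul_choose_le_pow_mul_choose (e := 1) (n := n - j) fun i hi => by
      simpa [Nat.sub_sub] using h i hi
  calc c ^ (k - j) * (n.choose j * a.choose (k - j))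
      = n.choose j * (c ^ (k - j) * a.choose (k - j)) := by ring
    _ ≤ n.choose j * (n - j).choose (k - j) := Nat.mul_le_mul_left _ hsmall
    _ = n.choose k * k.choose j := (choose_mul hjk).symm
    _ ≤ 2 ^ k * n.choose k := by
      rw [mul_comm]; exact Nat.mul_le_mul_right _ (choose_le_two_pow k j)

lemma three_pow_mul_choose_mul_choose_le {n t b j : ℕ} (hn : 24 * t ≤ n) (hb : 12 * t * b < n)
    (hj : j ≤ 2 * t) :
    3 ^ (10 * t) * (n.choose j * (2 * t * b).choose (12 * t - j)) ≤
      2 ^ (12 * t) * n.choose (12 * t) := by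
  calc _ ≤ 3 ^ (12 * t - j) * (n.choose j * (2 * t * b).choose (12 * t - j)) :=
        Nat.mul_le_mul_right _ (Nat.pow_le_pow_right (by norm_num) (by omega))
    _ ≤ _ := pow_mul_choose_mul_choose_le (by omega) fun i hi => by
        have : 6 * (2 * t * b) = 12 * t * b := by ring
        omega

lemma sum_range_choose_le_two_mul_pow {m : ℕ} (hm : 2 ≤ m) (d : ℕ) :
    ∑ i ∈ range (d + 1), m.choose i ≤ 2 * m ^ d := by
  induction d with
  | zero => simp
  | succ d ih =>
    rw [sum_range_succ, pow_succ]
    nlinarith [choose_le_pow m (d + 1), pow_succ m d]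

lemma choose_two_two_mul_add_one (t : ℕ) : (2 * t + 1).choose 2 = t * (2 * t + 1) := by
  rw [choose_two_right, Nat.add_sub_cancel,
    show (2 * t + 1) * (2 * t) = 2 * (t * (2 * t + 1)) by ring, Nat.mul_div_cancel_left _ two_pos]

end Nat

lemma two_mul_add_one_mul_two_pow_lt {t : ℕ} (ht : 1 ≤ t) :
    (2 * t + 1 : ℝ) * 2 ^ (12 * t) < Real.exp (-t) * 3 ^ (10 * t) := by
  have hlin : (2 * t + 1 : ℝ) ≤ 3 ^ t := by
    have := one_add_mul_le_pow (a := (2 : ℝ)) (by norm_num) t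
    norm_num at this; linarith
  have hexp : Real.exp t < 3 ^ t := by
    rw [← Real.exp_one_pow]
    exact pow_lt_pow_left₀ (Real.exp_one_lt_d9.trans (by norm_num)) (Real.exp_pos 1).le
      (by omega)
  rw [Real.exp_neg, inv_mul_eq_div, lt_div_iff₀ (Real.exp_pos _)]
  calc (2 * t + 1 : ℝ) * 2 ^ (12 * t) * Real.exp t ≤ 3 ^ t * 4096 ^ t * Real.exp t := by
        rw [pow_mul]; norm_num; gcongr
    _ < 3 ^ t * 4096 ^ t * 3 ^ t := mul_lt_mul_of_pos_left hexp (by positivity)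
    _ ≤ 59049 ^ t := by rw [← mul_pow, ← mul_pow]; gcongr; norm_num
    _ = 3 ^ (10 * t) := by rw [pow_mul]; norm_num

namespace Finset

section SetFamily

variable {α : Type*} [DecidableEq α] {𝒜 : Finset (Finset α)} {Y : Finset α}

lemma card_shatterer_le_sum_choose_of_subset (h𝒜 : ∀ s ∈ 𝒜, s ⊆ Y) :
    #𝒜.shatterer ≤ ∑ i ∈ range (𝒜.vcDim + 1), (#Y).choose i := by
  simp_rw [← card_powersetCard]
  refine (card_le_card fun s hs ↦ mem_biUnion.2 ⟨#s, ?_⟩).trans card_biUnion_le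
  have hs := mem_shatterer.1 hs
  obtain ⟨u, hu, hsu⟩ := hs.exists_superset
  exact ⟨mem_range.2 (Nat.lt_succ_of_le hs.card_le_vcDim),
    mem_powersetCard.2 ⟨hsu.trans (h𝒜 u hu), rfl⟩⟩

lemma card_le_two_mul_pow_of_vcDim_le {d : ℕ} (hY : Y.Nonempty) (h𝒜 : ∀ s ∈ 𝒜, s ⊆ Y)
    (hd : 𝒜.vcDim ≤ d) : #𝒜 ≤ 2 * #Y ^ d := by
  obtain hY1 | hY2 : #Y = 1 ∨ 2 ≤ #Y := by have := hY.card_pos; omega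
  · calc #𝒜 ≤ #Y.powerset := card_le_card fun s hs => mem_powerset.2 (h𝒜 s hs)
      _ = 2 * #Y ^ d := by simp [hY1]
  · calc #𝒜 ≤ #𝒜.shatterer := card_le_card_shatterer 𝒜
      _ ≤ ∑ i ∈ range (𝒜.vcDim + 1), (#Y).choose i :=
        card_shatterer_le_sum_choose_of_subset h𝒜
      _ ≤ ∑ i ∈ range (d + 1), (#Y).choose i :=
        sum_le_sum_of_subset (range_subset_range.2 (by omega))
      _ ≤ 2 * #Y ^ d := Nat.sum_range_choose_le_two_mul_pow hY2 d

lemma disjoint_symmDiff_of_inter_eq {s t : Finset α} (h : s ∩ Y = t ∩ Y) :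
    Disjoint (symmDiff s t) Y := by
  rw [disjoint_iff, inf_symmDiff_distrib_right]
  exact symmDiff_eq_bot.2 h

variable [Fintype α]

lemma card_filter_subset_subset_le (I T : Finset α) (k : ℕ) :
    #{X ∈ powersetCard k univ | I ⊆ X ∧ X ⊆ T} ≤ (#T).choose (k - #I) := by
  rw [← card_powersetCard]
  refine card_le_card_of_injOn (· \ I) (fun X hX => ?_) (fun X₁ h₁ X₂ h₂ he => ?_)
  · rw [mem_coe, mem_filter, mem_powersetCard_univ] at hX
    rw [mem_coe, mem_powersetCard]
    exact ⟨sdiff_subset.trans hX.2.2, by rw [card_sdiff_of_subset hX.2.1, hX.1]⟩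
  · rw [mem_coe, mem_filter] at h₁ h₂
    rw [← sdiff_union_of_subset h₁.2.1, ← sdiff_union_of_subset h₂.2.1]
    exact congrArg (· ∪ I) he

lemma choose_card_compl_le [Nonempty α] {D : Finset α} {δ : ℝ}
    (hD : δ * Fintype.card α ≤ #D) (m : ℕ) :
    ((#Dᶜ).choose m : ℝ) ≤ (1 - δ) ^ m * (Fintype.card α).choose m := by
  have hn : (0 : ℝ) < Fintype.card α := by exact_mod_cast Fintype.card_pos
  rw [card_compl]
  refine (Nat.choose_le_div_pow_mul_choose m (Nat.sub_le _ _) Fintype.card_pos).trans ?_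
  gcongr
  rw [Nat.cast_sub (card_le_univ D), div_le_iff₀ hn]
  linarith

end SetFamily

lemma card_filter_product_le {α β : Type*} (s : Finset α) (t : Finset β)
    (p : α × β → Prop) [DecidablePred p] (q : α → Prop) [DecidablePred q] {c : ℝ}
    (hc : 0 ≤ c)
    (h : ∀ a ∈ s, ¬ q a → (#{b ∈ t | p (a, b)} : ℝ) ≤ c) :
    (#{x ∈ s ×ˢ t | p x} : ℝ) ≤ #{a ∈ s | q a} * #t + #s * c := by
  have hfib : #{x ∈ s ×ˢ t | p x} = ∑ a ∈ s, #{b ∈ t | p (a, b)} := by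
    rw [card_filter, sum_product]
    exact sum_congr rfl fun a _ => (card_filter _ _).symm
  rw [hfib, Nat.cast_sum, ← sum_filter_add_sum_filter_not s q]
  gcongr
  · calc ∑ a ∈ s with q a, (#{b ∈ t | p (a, b)} : ℝ)
          ≤ ∑ a ∈ s with q a, (#t : ℝ) :=
          sum_le_sum fun a _ => by exact_mod_cast card_filter_le _ _
      _ = _ := by rw [sum_const, nsmul_eq_mul]
  · calc ∑ a ∈ s with ¬ q a, (#{b ∈ t | p (a, b)} : ℝ) ≤ ∑ a ∈ s with ¬ q a, c :=
          sum_le_sum fun a ha => h a (mem_filter.1 ha).1 (mem_filter.1 ha).2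
      _ ≤ _ := by
          rw [sum_const, nsmul_eq_mul]
          exact mul_le_mul_of_nonneg_right (by exact_mod_cast card_filter_le _ _) hc

end Finset

section CayleyIndep

variable {G : Type*} [AddCommGroup G] [DecidableEq G]

/-- `S` is an independent set of the Cayley graph on `G` generated by `B \ {0}`. -/
def IsCayleyIndep (B S : Finset G) : Prop := ∀ x ∈ S, ∀ y ∈ S, x ≠ y → x - y ∉ B

instance (B : Finset G) : DecidablePred (IsCayleyIndep B) := fun _ => by
  unfold IsCayleyIndep; infer_instance

lemma exists_isCayleyIndep_or_subset_add {B : Finset G} (h0 : (0 : G) ∈ B)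
    (hneg : ∀ x ∈ B, -x ∈ B) (X : Finset G) (s : ℕ) :
    (∃ S ⊆ X, #S = s + 1 ∧ IsCayleyIndep B S) ∨ ∃ I ⊆ X, #I ≤ s ∧ X ⊆ I + B := by
  obtain ⟨I, hI, hmax⟩ := exists_max_image {S ∈ X.powerset | IsCayleyIndep B S} card
    ⟨∅, mem_filter.2 ⟨empty_mem_powerset X, by simp [IsCayleyIndep]⟩⟩
  rw [mem_filter, mem_powerset] at hI
  obtain ⟨hIX, hIind⟩ := hI
  by_cases hIs : s + 1 ≤ #I
  · obtain ⟨S, hSI, hS⟩ := exists_subset_card_eq hIs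
    exact .inl ⟨S, hSI.trans hIX, hS, fun x hx y hy => hIind x (hSI hx) y (hSI hy)⟩
  refine .inr ⟨I, hIX, by omega, fun x hx => mem_add.2 ?_⟩
  by_cases hxI : x ∈ I
  · exact ⟨x, hxI, 0, h0, add_zero x⟩
  have hdep : ¬ IsCayleyIndep B (insert x I) := fun hind => by
    have := hmax _ (mem_filter.2 ⟨mem_powerset.2 (insert_subset hx hIX), hind⟩)
    rw [card_insert_of_notMem hxI] at this
    omega
  simp only [IsCayleyIndep, not_forall, not_not, mem_insert] at hdep
  obtain ⟨u, hu, v, hv, huv, huvB⟩ := hdep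
  rcases hu with rfl | hu <;> rcases hv with rfl | hv
  · exact absurd rfl huv
  · exact ⟨v, hv, u - v, huvB, add_sub_cancel v u⟩
  · exact ⟨u, hu, v - u, by simpa using hneg _ huvB, add_sub_cancel u v⟩
  · exact absurd huvB (hIind u hu v hv huv)

variable [Fintype G]

lemma card_filter_subset_add_le (B : Finset G) (k s : ℕ) :
    #{X ∈ powersetCard k univ | ∃ I ⊆ X, #I ≤ s ∧ X ⊆ I + B} ≤
      ∑ j ∈ range (s + 1), (Fintype.card G).choose j * (s * #B).choose (k - j) := by
  calc #{X ∈ powersetCard k univ | ∃ I ⊆ X, #I ≤ s ∧ X ⊆ I + B}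
      ≤ #((range (s + 1)).biUnion fun j => (powersetCard j univ).biUnion fun I =>
          {X ∈ powersetCard k univ | I ⊆ X ∧ X ⊆ I + B}) := by
        refine card_le_card fun X hX => ?_
        obtain ⟨hXk, I, hIX, hIs, hXI⟩ := mem_filter.1 hX
        simp only [mem_biUnion, mem_range, mem_powersetCard_univ, mem_filter]
        exact ⟨#I, by omega, I, rfl, mem_powersetCard_univ.1 hXk, hIX, hXI⟩
    _ ≤ ∑ j ∈ range (s + 1), ∑ I ∈ powersetCard j univ,
          #{X ∈ powersetCard k univ | I ⊆ X ∧ X ⊆ I + B} :=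
        card_biUnion_le.trans (sum_le_sum fun _ _ => card_biUnion_le)
    _ ≤ ∑ j ∈ range (s + 1), ∑ _I ∈ powersetCard j (univ : Finset G),
          (s * #B).choose (k - j) := by
        refine sum_le_sum fun j hj => sum_le_sum fun I hI => ?_
        rw [mem_powersetCard_univ] at hI
        have hIs : #I ≤ s := hI ▸ Nat.lt_succ_iff.1 (mem_range.1 hj)
        rw [← hI]
        exact (card_filter_subset_subset_le I _ k).trans
          (Nat.choose_le_choose _ (card_add_le.trans (Nat.mul_le_mul_right _ hIs)))
    _ = ∑ j ∈ range (s + 1), (Fintype.card G).choose j * (s * #B).choose (k - j) := by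
        simp [card_powersetCard]

lemma card_not_exists_isCayleyIndep_lt {B : Finset G} (h0 : (0 : G) ∈ B)
    (hneg : ∀ x ∈ B, -x ∈ B) {t : ℕ} (ht : 1 ≤ t) (hG : 24 * t ≤ Fintype.card G)
    (hB : 12 * t * #B < Fintype.card G) :
    (#{X ∈ powersetCard (12 * t) univ |
        ¬ ∃ S ⊆ X, #S = 2 * t + 1 ∧ IsCayleyIndep B S} : ℝ) <
      Real.exp (-t) * (Fintype.card G).choose (12 * t) := by
  set n := Fintype.card G
  set bad := {X ∈ powersetCard (12 * t) (univ : Finset G) |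
    ¬ ∃ S ⊆ X, #S = 2 * t + 1 ∧ IsCayleyIndep B S}
  have hcover : bad ⊆
      {X ∈ powersetCard (12 * t) (univ : Finset G) | ∃ I ⊆ X, #I ≤ 2 * t ∧ X ⊆ I + B} :=
    monotone_filter_right _ fun X _ hX =>
      (exists_isCayleyIndep_or_subset_add h0 hneg X (2 * t)).resolve_left hX
  have hcount : 3 ^ (10 * t) * #bad ≤ (2 * t + 1) * (2 ^ (12 * t) * n.choose (12 * t)) :=
    calc _ ≤ 3 ^ (10 * t) *
          ∑ j ∈ range (2 * t + 1), n.choose j * (2 * t * #B).choose (12 * t - j) :=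
          Nat.mul_le_mul_left _ ((card_le_card hcover).trans (card_filter_subset_add_le B _ _))
      _ ≤ ∑ _j ∈ range (2 * t + 1), 2 ^ (12 * t) * n.choose (12 * t) := by
          rw [mul_sum]
          exact sum_le_sum fun j hj => Nat.three_pow_mul_choose_mul_choose_le hG hB
            (Nat.lt_succ_iff.1 (mem_range.1 hj))
      _ = _ := by rw [sum_const, card_range, smul_eq_mul]
  have hcountR :
      (3 : ℝ) ^ (10 * t) * #bad ≤ (2 * t + 1) * 2 ^ (12 * t) * n.choose (12 * t) := by
    rw [mul_assoc]; exact_mod_cast hcount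
  have hchoose : (0 : ℝ) < n.choose (12 * t) := by exact_mod_cast Nat.choose_pos (by omega)
  nlinarith [two_mul_add_one_mul_two_pow_lt ht, pow_pos (three_pos (α := ℝ)) (10 * t)]

end CayleyIndep

section AlmostPeriods

variable {G : Type*} [AddCommGroup G] [DecidableEq G]

lemma card_symmDiff_image_add (A : Finset G) (x y : G) :
    #(symmDiff (A.image (· + x)) (A.image (· + y))) =
      #(symmDiff A (A.image (· + (y - x)))) := by
  rw [← card_image_of_injective _ (add_left_injective (-x)),
    image_symmDiff _ _ (add_left_injective (-x)), image_image, image_image]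
  congr 2
  · ext a; simp
  · ext a; simp [sub_eq_add_neg]

variable [Fintype G]

noncomputable def almostPeriods (A : Finset G) (δ : ℝ) : Finset G :=
  univ.filter fun x => (#(symmDiff A (A.image (· + x))) : ℝ) ≤ δ * Fintype.card G

lemma zero_mem_almostPeriods (A : Finset G) {δ : ℝ} (hδ : 0 ≤ δ) :
    0 ∈ almostPeriods A δ := by
  simp only [almostPeriods, mem_filter, mem_univ, true_and, add_zero, image_id', symmDiff_self,
    bot_eq_empty, card_empty, Nat.cast_zero]
  positivity

lemma neg_mem_almostPeriods {A : Finset G} {δ : ℝ} {x : G} (hx : x ∈ almostPeriods A δ) :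
    -x ∈ almostPeriods A δ := by
  simp only [almostPeriods, mem_filter, mem_univ, true_and] at hx ⊢
  have := card_symmDiff_image_add A x 0
  simp only [add_zero, image_id', zero_sub] at this
  rwa [← this, symmDiff_comm]

lemma card_filter_inter_eq_le (A : Finset G) {δ : ℝ} {x y : G}
    (hxy : y - x ∉ almostPeriods A δ) (m : ℕ) :
    (#{Y ∈ powersetCard m (univ : Finset G) |
        A.image (· + x) ∩ Y = A.image (· + y) ∩ Y} : ℝ) ≤
      (1 - δ) ^ m * (Fintype.card G).choose m := by
  set D := symmDiff (A.image (· + x)) (A.image (· + y))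
  have hD : δ * Fintype.card G ≤ #D := by
    simp only [almostPeriods, mem_filter, mem_univ, true_and, not_le] at hxy
    rw [card_symmDiff_image_add]
    exact hxy.le
  have hsub : {Y ∈ powersetCard m (univ : Finset G) |
      A.image (· + x) ∩ Y = A.image (· + y) ∩ Y} ⊆ powersetCard m Dᶜ := fun Y hY => by
    obtain ⟨hYm, hY⟩ := mem_filter.1 hY
    exact mem_powersetCard.2 ⟨subset_compl_iff_disjoint_left.2
      (disjoint_symmDiff_of_inter_eq hY), mem_powersetCard_univ.1 hYm⟩
  calc _ ≤ (#(powersetCard m Dᶜ) : ℝ) := by exact_mod_cast card_le_card hsub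
    _ ≤ _ := by rw [card_powersetCard]; exact choose_card_compl_le hD m

lemma card_filter_vcDim_le_of_isCayleyIndep (A : Finset G) {δ : ℝ} {m d : ℕ} (hm : 1 ≤ m)
    {X S : Finset G} (hSX : S ⊆ X) (hS : 2 * m ^ d < #S)
    (hind : IsCayleyIndep (almostPeriods A δ) S) :
    (#{Y ∈ powersetCard m (univ : Finset G) |
        (X.image fun x => A.image (· + x) ∩ Y).vcDim ≤ d} : ℝ) ≤
      (#S).choose 2 * ((1 - δ) ^ m * (Fintype.card G).choose m) := by
  set collide := fun P : Finset G => {Y ∈ powersetCard m (univ : Finset G) |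
    ∀ x ∈ P, ∀ y ∈ P, A.image (· + x) ∩ Y = A.image (· + y) ∩ Y}
  have hsub : {Y ∈ powersetCard m (univ : Finset G) |
      (X.image fun x => A.image (· + x) ∩ Y).vcDim ≤ d} ⊆
      (S.powersetCard 2).biUnion collide := fun Y hY => by
    obtain ⟨hYm, hvc⟩ := mem_filter.1 hY
    have hYcard := mem_powersetCard_univ.1 hYm
    have htrace : #(X.image fun x => A.image (· + x) ∩ Y) ≤ 2 * m ^ d :=
      hYcard ▸ card_le_two_mul_pow_of_vcDim_le (card_pos.1 (by omega)) (by simp) hvc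
    obtain ⟨x, hx, y, hy, hxy, hcol⟩ := exists_ne_map_eq_of_card_lt_of_maps_to
      (f := fun x => A.image (· + x) ∩ Y) (htrace.trans_lt hS)
      fun x hx => mem_image_of_mem _ (hSX hx)
    refine mem_biUnion.2 ⟨{x, y}, mem_powersetCard.2 ⟨by simp [insert_subset_iff, hx, hy],
      card_pair hxy⟩, mem_filter.2 ⟨hYm, ?_⟩⟩
    simp only [mem_insert, mem_singleton]
    rintro u (rfl | rfl) v (rfl | rfl) <;> simp only [hcol]
  have hpair : ∀ P ∈ S.powersetCard 2,
      (#(collide P) : ℝ) ≤ (1 - δ) ^ m * (Fintype.card G).choose m := fun P hP => by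
    obtain ⟨hPS, hP2⟩ := mem_powersetCard.1 hP
    obtain ⟨x, y, hxy, rfl⟩ := card_eq_two.1 hP2
    refine le_trans ?_ (card_filter_inter_eq_le A
      (hind y (hPS (by simp)) x (hPS (by simp)) hxy.symm) m)
    exact Nat.cast_le.2 (card_le_card (monotone_filter_right _ fun Y _ hY =>
      hY x (by simp) y (by simp)))
  calc _ ≤ (#((S.powersetCard 2).biUnion collide) : ℝ) := by exact_mod_cast card_le_card hsub
    _ ≤ ∑ P ∈ S.powersetCard 2, (#(collide P) : ℝ) := by exact_mod_cast card_biUnion_le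
    _ ≤ ∑ _P ∈ S.powersetCard 2, (1 - δ) ^ m * ((Fintype.card G).choose m : ℝ) :=
        sum_le_sum hpair
    _ = _ := by rw [sum_const, card_powersetCard, nsmul_eq_mul]

end AlmostPeriods

theorem stmt_12 {G : Type*} [AddCommGroup G] [Fintype G] [DecidableEq G]
    (m d : ℕ) (hm : 1 ≤ m) (hd : 1 ≤ d) (δ : ℝ) (hδ0 : 0 < δ) (hδ1 : δ < 1)
    (hG : 24 * m ^ d ≤ Fintype.card G) (A : Finset G)
    (hprob : (Real.exp (-(m : ℝ) ^ d) + 3 * (m : ℝ) ^ (2 * d) * (1 - δ) ^ m) *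
        (((Fintype.card G).choose (12 * m ^ d)) * ((Fintype.card G).choose m)) ≤
      ((((univ : Finset G).powersetCard (12 * m ^ d)) ×ˢ
          ((univ : Finset G).powersetCard m)).filter fun p =>
        (p.1.image fun x => (A.image (· + x)) ∩ p.2).vcDim ≤ d).card) :
    (Fintype.card G : ℝ) / (12 * m ^ d) ≤
      ((univ.filter fun x : G =>
        ((symmDiff A (A.image (· + x))).card : ℝ) ≤ δ * Fintype.card G).card : ℝ) := by
  change _ ≤ (#(almostPeriods A δ) : ℝ)
  by_contra! hsmall
  set n := Fintype.card G
  set t := m ^ d with ht_def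
  have ht : 1 ≤ t := Nat.one_le_pow _ _ hm
  have hB : 12 * t * #(almostPeriods A δ) < n := by
    rw [lt_div_iff₀ (by positivity)] at hsmall
    exact_mod_cast (by push_cast [ht_def]; linarith :
      ((12 * t * #(almostPeriods A δ) : ℕ) : ℝ) < n)
  have hδ : 0 ≤ 1 - δ := by linarith
  have hmn : m ≤ n := (Nat.le_self_pow (Nat.one_le_iff_ne_zero.1 hd) m).trans (by omega)
  have hCm : (0 : ℝ) < n.choose m := by exact_mod_cast Nat.choose_pos hmn
  have hcount := card_filter_product_le (powersetCard (12 * t) univ) (powersetCard m univ)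
    (fun p : Finset G × Finset G => (p.1.image fun x => A.image (· + x) ∩ p.2).vcDim ≤ d)
    (fun X => ¬ ∃ S ⊆ X, #S = 2 * t + 1 ∧ IsCayleyIndep (almostPeriods A δ) S)
    (c := 3 * t ^ 2 * ((1 - δ) ^ m * n.choose m)) (by positivity) fun X _ hX => by
      obtain ⟨S, hSX, hS, hind⟩ := not_not.1 hX
      have hpairs : ((#S).choose 2 : ℝ) ≤ 3 * t ^ 2 := by
        rw [hS, Nat.choose_two_two_mul_add_one]; push_cast
        nlinarith [(Nat.one_le_cast (α := ℝ)).2 ht]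
      exact (card_filter_vcDim_le_of_isCayleyIndep A hm hSX (by omega) hind).trans
        (mul_le_mul_of_nonneg_right hpairs (by positivity))
  have hbad := card_not_exists_isCayleyIndep_lt (zero_mem_almostPeriods A hδ0.le)
    (fun _ => neg_mem_almostPeriods) ht hG hB
  simp only [card_powersetCard, card_univ] at hcount
  rw [pow_mul', ← Nat.cast_pow m d, ← ht_def] at hprob
  nlinarith [mul_lt_mul_of_pos_right hbad hCm]
end
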